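/- Let (X,d_X) and (Y,d_Y) be metric spaces both satisfying the Weak Besicovitch Covering Property. Then the product X × Y equipped with the max distance d_{X×Y}((x,y),(x',y')) := max(d_X(x,x'), d_Y(y,y')) satisfies the Weak Besicovitch Covering Property. -/

import Mathlib

/-- The closed ball of center `p` and radius `r` for a distance-like function `d`. -/
def QBall {X : Type*} (d : X → X → ℝ) (p : X) (r : ℝ) : Set X := {q | d q p ≤ r}

/-- A family of Besicovitch balls: a finite family of balls `B(x, r x)`, `x ∈ s`, such that
no center belongs to the ball of another center, with nonvoid common intersection. -/
def IsBesicovitchFamily {X : Type*} (d : X → X → ℝ) (s : Finset X) (r : X → ℝ) : Prop :=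
  (∀ x ∈ s, 0 < r x) ∧ (∀ x ∈ s, ∀ y ∈ s, x ≠ y → x ∉ QBall d y (r y)) ∧
    ∃ z, ∀ x ∈ s, z ∈ QBall d x (r x)

/-- The Weak Besicovitch Covering Property. -/
def HasWBCP {X : Type*} (d : X → X → ℝ) : Prop :=
  ∃ Q : ℕ, 1 ≤ Q ∧ ∀ (s : Finset X) (r : X → ℝ), IsBesicovitchFamily d s r → s.card ≤ Q

/-!
Given a Besicovitch family in `X × Y`, colour a pair of distinct centres `p, q` red when
`max (r p) (r q) < d_X(p.1, q.1)` and blue otherwise. Since neither centre lies in the other's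
ball for the max distance, blue pairs satisfy `max (r p) (r q) < d_Y(p.2, q.2)`. Hence a red
clique projects injectively to a Besicovitch family in `X` (same radii, centre of intersection
`z.1`), and a blue clique to one in `Y`; so red cliques have at most `Q_X` elements and blue ones
at most `Q_Y`, and Ramsey's theorem bounds the family by `binom(Q_X + Q_Y, Q_X)`.
-/

namespace Finset

variable {α : Type*}

theorem eq_empty_of_forall_pairwise_card_le_zero {P : α → α → Prop} {s : Finset α}
    (h : ∀ t ⊆ s, (t : Set α).Pairwise P → t.card ≤ 0) : s = ∅ :=
  eq_empty_of_forall_notMem fun x hx => by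
    simpa using h {x} (singleton_subset_iff.2 hx) (by simp)

theorem card_le_of_pairwise_of_subset_filter [DecidableEq α] {P : α → α → Prop} {x : α}
    [DecidablePred (P x)] (hP : ∀ x y, P x y → P y x) {s : Finset α} (hx : x ∈ s)
    {a : ℕ} (h : ∀ t ⊆ s, (t : Set α).Pairwise P → t.card ≤ a + 1) :
    ∀ t ⊆ (s.erase x).filter (P x), (t : Set α).Pairwise P → t.card ≤ a := by
  intro t ht hPt
  have hxt : x ∉ t := fun hxt => notMem_erase x s (mem_of_mem_filter x (ht hxt))
  have hPx : ∀ y ∈ t, P x y := fun y hy => (mem_filter.1 (ht hy)).2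
  have hinsert : insert x t ⊆ s :=
    insert_subset hx (ht.trans ((filter_subset _ _).trans (erase_subset _ _)))
  have := h (insert x t) hinsert <| by
    rw [coe_insert]
    exact hPt.insert fun y hy _ => ⟨hPx y hy, hP _ _ (hPx y hy)⟩
  rwa [card_insert_of_notMem hxt, Nat.add_le_add_iff_right] at this

/-- Erdős–Szekeres form of Ramsey's theorem for two colours. -/
theorem card_lt_choose_of_pairwise (R : α → α → Prop) (hR : ∀ x y, R x y → R y x) (a b : ℕ)
    (s : Finset α) (ha : ∀ t ⊆ s, (t : Set α).Pairwise R → t.card ≤ a)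
    (hb : ∀ t ⊆ s, (t : Set α).Pairwise (fun x y => ¬ R x y) → t.card ≤ b) :
    s.card < (a + b).choose a := by
  classical
  induction a generalizing b s with
  | zero => simp [eq_empty_of_forall_pairwise_card_le_zero ha]
  | succ a iha =>
    induction b generalizing s with
    | zero => simp [eq_empty_of_forall_pairwise_card_le_zero hb]
    | succ b ihb =>
      obtain rfl | ⟨x, hx⟩ := s.eq_empty_or_nonempty
      · simp [Nat.choose_pos]
      have hAsub : (s.erase x).filter (R x) ⊆ s := (filter_subset _ _).trans (erase_subset _ _)
      have hBsub : (s.erase x).filter (fun y => ¬ R x y) ⊆ s :=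
        (filter_subset _ _).trans (erase_subset _ _)
      have hA := iha (b + 1) _
        (card_le_of_pairwise_of_subset_filter hR hx ha)
        (fun t ht => hb t (ht.trans hAsub))
      have hB := ihb _ (fun t ht => ha t (ht.trans hBsub))
        (card_le_of_pairwise_of_subset_filter (fun x y h h' => h (hR y x h')) hx hb)
      have hsplit := card_filter_add_card_filter_not (s := s.erase x) (R x)
      have hpascal : (a + 1 + (b + 1)).choose (a + 1)
          = (a + (b + 1)).choose a + (a + 1 + b).choose (a + 1) := by
        rw [show a + 1 + (b + 1) = (a + b + 1) + 1 by omega, Nat.choose_succ_succ,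
          show a + (b + 1) = a + b + 1 by omega, show a + 1 + b = a + b + 1 by omega]
      have := card_erase_add_one hx
      omega

end Finset

theorem card_le_of_pairwise_max_lt_dist {W Z : Type*} [PseudoMetricSpace Z] {Q : ℕ}
    (hQ : ∀ (s : Finset Z) (r : Z → ℝ), IsBesicovitchFamily (fun p q => dist p q) s r →
      s.card ≤ Q)
    (t : Finset W) (f : W → Z) (r : W → ℝ) (hr : ∀ p ∈ t, 0 < r p)
    (hsep : (t : Set W).Pairwise fun p q => max (r p) (r q) < dist (f p) (f q))
    (z : Z) (hz : ∀ p ∈ t, dist z (f p) ≤ r p) : t.card ≤ Q := by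
  classical
  cases isEmpty_or_nonempty W
  · simp [Finset.eq_empty_of_isEmpty t]
  have hinj : Set.InjOn f t := fun p hp q hq hfpq => by
    by_contra hne
    have : max (r p) (r q) < dist (f p) (f q) := hsep hp hq hne
    rw [hfpq, dist_self] at this
    linarith [hr p hp, le_max_left (r p) (r q)]
  -- On `t.image f` the radius of `f p` is read off through the inverse of `f` on `t`.
  have hinv := hinj.leftInvOn_invFunOn
  rw [← Finset.card_image_of_injOn hinj]
  refine hQ _ (r ∘ Function.invFunOn f t) ⟨?_, ?_, z, ?_⟩ <;>
    simp only [Finset.forall_mem_image, QBall, Set.mem_ofPred_eq, Function.comp_apply]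
  · intro p hp
    rw [hinv hp]
    exact hr p hp
  · intro p hp q hq hne
    rw [hinv hq, not_le]
    exact (le_max_right _ _).trans_lt (hsep hp hq fun hpq => hne (congrArg f hpq))
  · intro p hp
    rw [hinv hp]
    exact hz p hp

theorem IsBesicovitchFamily.max_lt_dist_snd {X Y : Type*} [PseudoMetricSpace X]
    [PseudoMetricSpace Y] {s : Finset (X × Y)} {r : X × Y → ℝ}
    (h : IsBesicovitchFamily (fun p q : X × Y => max (dist p.1 q.1) (dist p.2 q.2)) s r)
    {p q : X × Y} (hp : p ∈ s) (hq : q ∈ s) (hne : p ≠ q)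
    (hfst : ¬ max (r p) (r q) < dist p.1 q.1) : max (r p) (r q) < dist p.2 q.2 := by
  -- The larger of the two balls contains the other centre in its first coordinate but not
  -- in the product, so the second coordinates must be far apart.
  have hpq := h.2.1 p hp q hq hne
  have hqp := h.2.1 q hq p hp hne.symm
  simp only [QBall, Set.mem_ofPred_eq, not_le, lt_max_iff, dist_comm q.1, dist_comm q.2]
    at hpq hqp
  rw [not_lt, le_max_iff] at hfst
  rw [max_lt_iff]
  rcases hpq with hpq | hpq <;> rcases hqp with hqp | hqp <;> rcases hfst with hfst | hfst <;>
    constructor <;> linarith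

theorem statement2 {X Y : Type*} [MetricSpace X] [MetricSpace Y]
    (hX : HasWBCP (fun p q : X => dist p q)) (hY : HasWBCP (fun p q : Y => dist p q)) :
    HasWBCP (fun p q : X × Y => max (dist p.1 q.1) (dist p.2 q.2)) := by
  obtain ⟨QX, -, hQX⟩ := hX
  obtain ⟨QY, -, hQY⟩ := hY
  refine ⟨(QX + QY).choose QX, Nat.choose_pos (Nat.le_add_right _ _), fun s r hs => ?_⟩
  obtain ⟨z, hz⟩ := hs.2.2
  let R : X × Y → X × Y → Prop := fun p q => max (r p) (r q) < dist p.1 q.1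
  have hR : ∀ p q, R p q → R q p := fun p q h => by simpa only [R, max_comm, dist_comm] using h
  refine (Finset.card_lt_choose_of_pairwise R hR QX QY s ?_ ?_).le
  · intro t ht htR
    exact card_le_of_pairwise_max_lt_dist hQX t Prod.fst r (fun p hp => hs.1 p (ht hp)) htR z.1
      fun p hp => (le_max_left _ _).trans (hz p (ht hp))
  · intro t ht htR
    exact card_le_of_pairwise_max_lt_dist hQY t Prod.snd r (fun p hp => hs.1 p (ht hp))
      (fun p hp q hq hne => hs.max_lt_dist_snd (ht hp) (ht hq) hne (htR hp hq hne)) z.2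
      fun p hp => (le_max_right _ _).trans (hz p (ht hp))
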